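/- Let m ≥ 1 be an integer and let L > 0 and A be real numbers with 0 ≤ A ≤ 4π and 4πA − A² ≤ L². Then min over (k, l) ∈ ℤ² of [ k²m² + (4π²/L²)·((2l + 1) − kmA/(2π))² ] = 4π²/L²; that is, for all integers k and l one has k²m² + (4π²/L²)·((2l + 1) − kmA/(2π))² ≥ 4π²/L², with equality attained at (k, l) = (0, 0). (These are the Dirac eigenvalues on the Hopf torus in the Lens space L(m,1); the constraints on A and L hold for the length L and enclosed area A of a simple closed curve on the unit sphere.) -/

import Mathlib

/-!
With `X = km` and `N = 2l + 1`, multiplying by `L²` turns the claim into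
`4π² ≤ L²X² + (2πN - XA)²`, and the difference of the two sides is
`(L² - 4πA + A²) X² + π A ((N - 2X)² - 1) + π (4π - A) (N² - 1)`.
Each term is nonnegative: the first by the isoperimetric-type hypothesis, the other two because
`0 ≤ A ≤ 4π` and the integers `N` and `N - 2X` are odd, so their squares are at least `1`.
-/

open Real

lemma one_le_intCast_sq_of_odd {n : ℤ} (hn : Odd n) : (1 : ℝ) ≤ (n : ℝ) ^ 2 := by
  have hn0 : n ≠ 0 := by rintro rfl; exact Int.not_odd_zero hn
  exact_mod_cast (one_le_sq_iff_one_le_abs n).2 (Int.one_le_abs hn0)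

lemma sq_le_mul_sq_add_sq_of_odd {c A L : ℝ} (hc : 0 ≤ c) (hA0 : 0 ≤ A) (hAc : A ≤ 2 * c)
    (hAL : 2 * c * A - A ^ 2 ≤ L ^ 2) (x : ℤ) {n : ℤ} (hn : Odd n) :
    c ^ 2 ≤ L ^ 2 * x ^ 2 + (c * n - x * A) ^ 2 := by
  have hn_sq : 0 ≤ (n : ℝ) ^ 2 - 1 := sub_nonneg.2 (one_le_intCast_sq_of_odd hn)
  have hnx_sq : 0 ≤ ((n : ℝ) - 2 * x) ^ 2 - 1 := by
    have := one_le_intCast_sq_of_odd (hn.sub_even (even_two_mul x))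
    push_cast at this
    linarith
  have hdiff : L ^ 2 * x ^ 2 + (c * n - x * A) ^ 2 - c ^ 2
      = (L ^ 2 - (2 * c * A - A ^ 2)) * x ^ 2 + c / 2 * A * (((n : ℝ) - 2 * x) ^ 2 - 1)
        + c / 2 * (2 * c - A) * ((n : ℝ) ^ 2 - 1) := by ring
  have hAc' := sub_nonneg.2 hAc
  have hAL' := sub_nonneg.2 hAL
  have : 0 ≤ L ^ 2 * x ^ 2 + (c * n - x * A) ^ 2 - c ^ 2 := by rw [hdiff]; positivity
  linarith

theorem dirac_eigenvalues_lens_space_hopf_torus_min_general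
    (m : ℤ)
    (L A : ℝ) (hL : 0 < L) (hA0 : 0 ≤ A) (hA4π : A ≤ 4 * π)
    (hiso : 4 * π * A - A^2 ≤ L^2) :
    (∀ k l : ℤ,
      (k:ℝ)^2 * (m:ℝ)^2
        + (4 * π^2 / L^2) * ((2 * (l:ℝ) + 1) - (k:ℝ) * (m:ℝ) * A / (2 * π))^2
        ≥ 4 * π^2 / L^2) ∧
    ((0:ℝ)^2 * (m:ℝ)^2
        + (4 * π^2 / L^2) * ((2 * (0:ℝ) + 1) - (0:ℝ) * (m:ℝ) * A / (2 * π))^2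
        = 4 * π^2 / L^2) := by
  refine ⟨fun k l => ?_, by simp⟩
  have hbound := sq_le_mul_sq_add_sq_of_odd (c := 2 * π) (L := L) (by positivity) hA0
    (by linarith) (by linarith) (k * m) (odd_two_mul_add_one l)
  have hclear : (k:ℝ)^2 * (m:ℝ)^2
      + (4 * π^2 / L^2) * ((2 * (l:ℝ) + 1) - (k:ℝ) * (m:ℝ) * A / (2 * π))^2
      = (L ^ 2 * ((k * m : ℤ) : ℝ) ^ 2
          + (2 * π * ((2 * l + 1 : ℤ) : ℝ) - ((k * m : ℤ) : ℝ) * A) ^ 2) / L ^ 2 := by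
    push_cast
    field_simp
    ring
  rw [hclear, ge_iff_le, div_le_div_iff_of_pos_right (by positivity)]
  linarith

/-- The Dirac eigenvalues `λ²_m(k,l) = k²m² + (4π²/L²)((2l+1) - kmA/(2π))²` on the Hopf
torus in the Lens space `L(m,1)` are bounded below by `4π²/L²`, provided `m ≥ 1`,
`0 ≤ A ≤ 4π` and `4πA - A² ≤ L²`, and this minimum is attained at `(k,l) = (0,0)`. -/
theorem dirac_eigenvalues_lens_space_hopf_torus_min
    (m : ℤ) (hm : 1 ≤ m)
    (L A : ℝ) (hL : 0 < L) (hA0 : 0 ≤ A) (hA4π : A ≤ 4 * π)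
    (hiso : 4 * π * A - A^2 ≤ L^2) :
    (∀ k l : ℤ,
      (k:ℝ)^2 * (m:ℝ)^2
        + (4 * π^2 / L^2) * ((2 * (l:ℝ) + 1) - (k:ℝ) * (m:ℝ) * A / (2 * π))^2
        ≥ 4 * π^2 / L^2) ∧
    ((0:ℝ)^2 * (m:ℝ)^2
        + (4 * π^2 / L^2) * ((2 * (0:ℝ) + 1) - (0:ℝ) * (m:ℝ) * A / (2 * π))^2
        = 4 * π^2 / L^2) :=
  dirac_eigenvalues_lens_space_hopf_torus_min_general m L A hL hA0 hA4π hiso
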